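/- arXiv:2303.13738 — 6 statements merged into one kernel-verified Lean document; each statement's English description precedes it below -/
import Mathlib

section
/- Let T : X → X be a bounded linear nonexpansive operator with T ≠ Id. Then the modulus of averagedness of T equals sup over all z with z ≠ Tz of ‖z - Tz‖² / (2⟨z, z - Tz⟩). -/
open Set RealInnerProductSpace

variable {X : Type*} [NormedAddCommGroup X] [InnerProductSpace ℝ X] [CompleteSpace X]

def Nonexpansive (T : X → X) : Prop := ∀ x y, ‖T x - T y‖ ≤ ‖x - y‖

def IsAveraged (T : X → X) (κ : ℝ) : Prop :=
  ∃ N : X → X, Nonexpansive N ∧ ∀ x, T x = (1 - κ) • x + κ • N x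

/-
For κ > 0 the only possible N in `T = (1 - κ) Id + κ N` is `N = Id - κ⁻¹ (Id - T)`, which is linear
with T, so T is κ-averaged iff `‖z - κ⁻¹ (z - T z)‖ ≤ ‖z‖` for all z. Expanding the square, this reads
`‖z - T z‖² ≤ 2κ ⟪z, z - T z⟫`, i.e. κ bounds every quotient. Nonexpansiveness of T is the case κ = 1,
which makes the denominators positive and the quotients at most 1, and κ = 0 is excluded by T ≠ Id.
-/

section Averaged

variable {E : Type*} [NormedAddCommGroup E] [InnerProductSpace ℝ E]

lemma norm_sub_inv_smul_le_norm_iff {κ : ℝ} (hκ : 0 < κ) (z w : E) :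
    ‖z - κ⁻¹ • w‖ ≤ ‖z‖ ↔ ‖w‖ ^ 2 ≤ 2 * κ * ⟪z, w⟫ := by
  rw [← sq_le_sq₀ (norm_nonneg _) (norm_nonneg _), norm_sub_sq_real, real_inner_smul_right,
    norm_smul, Real.norm_of_nonneg (inv_nonneg.2 hκ.le)]
  have hscale : κ ^ 2 * (2 * (κ⁻¹ * ⟪z, w⟫) - (κ⁻¹ * ‖w‖) ^ 2) = 2 * κ * ⟪z, w⟫ - ‖w‖ ^ 2 := by
    field_simp
  constructor <;> intro h <;> nlinarith [pow_pos hκ 2]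

lemma eq_id_of_isAveraged_zero {T : E → E} (h : IsAveraged T 0) : T = id := by
  obtain ⟨N, -, hN⟩ := h
  funext x
  simpa using hN x

lemma isAveraged_one {T : E → E} (hT : Nonexpansive T) : IsAveraged T 1 :=
  ⟨T, hT, fun x => by simp⟩

lemma isAveraged_iff_nonexpansive {T : E → E} {κ : ℝ} (hκ : κ ≠ 0) :
    IsAveraged T κ ↔ Nonexpansive (fun x => x - κ⁻¹ • (x - T x)) := by
  constructor
  · rintro ⟨N, hN, hTN⟩
    convert hN using 2 with x
    rw [hTN x]
    match_scalars <;> field_simp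
    ring
  · intro hN
    refine ⟨_, hN, fun x => ?_⟩
    match_scalars <;> field_simp
    ring

lemma nonexpansive_iff_norm_map_le (f : E →ₗ[ℝ] E) : Nonexpansive f ↔ ∀ z, ‖f z‖ ≤ ‖z‖ :=
  ⟨fun h z => by simpa using h z 0, fun h x y => by simpa using h (x - y)⟩

lemma isAveraged_iff_norm_sq_le (T : E →ₗ[ℝ] E) {κ : ℝ} (hκ : 0 < κ) :
    IsAveraged T κ ↔ ∀ z, ‖z - T z‖ ^ 2 ≤ 2 * κ * ⟪z, z - T z⟫ := by
  simp only [← norm_sub_inv_smul_le_norm_iff hκ, isAveraged_iff_nonexpansive hκ.ne']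
  exact nonexpansive_iff_norm_map_le (LinearMap.id - κ⁻¹ • (LinearMap.id - T))

lemma inner_sub_apply_pos (T : E →ₗ[ℝ] E) (hT : Nonexpansive T) {z : E} (hz : z ≠ T z) :
    0 < ⟪z, z - T z⟫ := by
  have hT1 := (isAveraged_iff_norm_sq_le T one_pos).1 (isAveraged_one hT) z
  have hnum : 0 < ‖z - T z‖ ^ 2 := by
    have := sub_ne_zero.2 hz
    positivity
  linarith

def averagednessQuotients (T : E → E) : Set ℝ :=
  {r | ∃ z, z ≠ T z ∧ r = ‖z - T z‖ ^ 2 / (2 * ⟪z, z - T z⟫)}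

lemma isAveraged_iff_mem_upperBounds (T : E →ₗ[ℝ] E) (hT : Nonexpansive T) {κ : ℝ}
    (hκ : 0 < κ) : IsAveraged T κ ↔ κ ∈ upperBounds (averagednessQuotients T) := by
  simp only [isAveraged_iff_norm_sq_le T hκ, mem_upperBounds, averagednessQuotients,
    mem_ofPred_eq, forall_exists_index, and_imp]
  constructor
  · rintro h _ z hz rfl
    rw [div_le_iff₀ (by linarith [inner_sub_apply_pos T hT hz])]
    linarith [h z]
  · intro h z
    by_cases hz : z = T z
    · simp [← hz]
    · have := h _ z hz rfl
      rw [div_le_iff₀ (by linarith [inner_sub_apply_pos T hT hz])] at this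
      linarith

lemma ContinuousLinearMap.nonexpansive_of_opNorm_le_one {T : E →L[ℝ] E} (hT : ‖T‖ ≤ 1) :
    Nonexpansive T :=
  fun x y => by simpa [← map_sub] using T.le_of_opNorm_le hT (x - y)

end Averaged

theorem modulus_eq_sup_quotient (T : X →L[ℝ] X) (hT : ‖T‖ ≤ 1)
    (hTne : T ≠ ContinuousLinearMap.id ℝ X) :
    IsLeast {κ : ℝ | κ ∈ Icc (0 : ℝ) 1 ∧ IsAveraged (⇑T) κ}
      (sSup {r : ℝ | ∃ z : X, z ≠ T z ∧ r = ‖z - T z‖ ^ 2 / (2 * ⟪z, z - T z⟫)}) := by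
  change IsLeast _ (sSup (averagednessQuotients T))
  have hTn := T.nonexpansive_of_opNorm_le_one hT
  have hbound {κ : ℝ} (hκ : 0 < κ) := isAveraged_iff_mem_upperBounds (T : X →ₗ[ℝ] X) hTn hκ
  have h1 : (1 : ℝ) ∈ upperBounds (averagednessQuotients T) :=
    (hbound one_pos).1 (isAveraged_one hTn)
  obtain ⟨z₀, hz₀⟩ : ∃ z, z ≠ T z := by
    contrapose! hTne
    ext x
    exact (hTne x).symm
  have hq₀ : ‖z₀ - T z₀‖ ^ 2 / (2 * ⟪z₀, z₀ - T z₀⟫) ∈ averagednessQuotients T := ⟨z₀, hz₀, rfl⟩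
  have hlub := isLUB_csSup ⟨_, hq₀⟩ ⟨1, h1⟩
  have hpos : 0 < sSup (averagednessQuotients T) := by
    refine lt_of_lt_of_le ?_ (hlub.1 hq₀)
    have hden := inner_sub_apply_pos (T : X →ₗ[ℝ] X) hTn hz₀
    have hnum := sub_ne_zero.2 hz₀
    positivity
  refine ⟨⟨⟨hpos.le, hlub.2 h1⟩, (hbound hpos).2 hlub.1⟩, ?_⟩
  rintro κ ⟨⟨hκ0, -⟩, hκ⟩
  have hκpos : 0 < κ := hκ0.lt_of_ne <| by
    rintro rfl
    exact hTne (DFunLike.coe_injective (eq_id_of_isAveraged_zero hκ))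
  exact hlub.2 ((hbound hκpos).1 hκ)
end

section
/- Let R : X → X be a bounded linear nonexpansive operator on a real Hilbert space. Then the closure of the range of Id - R equals the orthogonal complement of the fixed point set of R, i.e., closure(ran(Id - R)) = (Fix R)^⊥. -/
/-! A contraction `T` and its adjoint have the same fixed points: if `T x = x`, then
`re ⟪T† x, x⟫ = ‖x‖²` while `‖T† x‖ ≤ ‖x‖`, which forces `T† x = x` (equality in Cauchy–Schwarz).
Hence `(range (1 - T))ᗮ = ker (1 - T†) = ker (1 - T)`, and taking orthogonal complements once more
gives the closure of the range. -/

open scoped InnerProduct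

namespace ContinuousLinearMap

variable {𝕜 E : Type*} [RCLike 𝕜] [NormedAddCommGroup E] [InnerProductSpace 𝕜 E] [CompleteSpace E]

theorem adjoint_apply_eq_self_of_apply_eq_self {T : E →L[𝕜] E} (hT : ‖T‖ ≤ 1) {x : E}
    (hx : T x = x) : (T†) x = x := by
  refine eq_of_norm_le_re_inner_eq_norm_sq (𝕜 := 𝕜) ?_ ?_
  · simpa using T†.le_of_opNorm_le ((adjoint.norm_map T).trans_le hT) x
  · rw [adjoint_inner_left, hx, inner_self_eq_norm_sq]

theorem ker_id_sub_le_ker_id_sub_adjoint {T : E →L[𝕜] E} (hT : ‖T‖ ≤ 1) :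
    (ContinuousLinearMap.id 𝕜 E - T).ker ≤ (ContinuousLinearMap.id 𝕜 E - T†).ker := by
  intro x hx
  simp only [LinearMap.mem_ker, coe_coe, sub_apply, id_apply, sub_eq_zero] at hx ⊢
  exact (adjoint_apply_eq_self_of_apply_eq_self hT hx.symm).symm

theorem ker_id_sub_adjoint_of_norm_le_one {T : E →L[𝕜] E} (hT : ‖T‖ ≤ 1) :
    (ContinuousLinearMap.id 𝕜 E - T†).ker = (ContinuousLinearMap.id 𝕜 E - T).ker := by
  refine le_antisymm ?_ (ker_id_sub_le_ker_id_sub_adjoint hT)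
  simpa using ker_id_sub_le_ker_id_sub_adjoint ((adjoint.norm_map T).trans_le hT)

theorem topologicalClosure_range_id_sub_of_norm_le_one {T : E →L[𝕜] E} (hT : ‖T‖ ≤ 1) :
    (ContinuousLinearMap.id 𝕜 E - T).range.topologicalClosure =
      (ContinuousLinearMap.id 𝕜 E - T).kerᗮ := by
  rw [← Submodule.orthogonal_orthogonal_eq_closure, orthogonal_range, map_sub, adjoint_id,
    ker_id_sub_adjoint_of_norm_le_one hT]

end ContinuousLinearMap

theorem closure_range_id_sub_eq_orthogonal_fix
    {X : Type*} [NormedAddCommGroup X] [InnerProductSpace ℝ X] [CompleteSpace X]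
    (R : X →L[ℝ] X) (hR : ‖R‖ ≤ 1) :
    (LinearMap.range ((ContinuousLinearMap.id ℝ X - R : X →L[ℝ] X) : X →ₗ[ℝ] X)).topologicalClosure
      = (LinearMap.ker ((ContinuousLinearMap.id ℝ X - R : X →L[ℝ] X) : X →ₗ[ℝ] X))ᗮ :=
  ContinuousLinearMap.topologicalClosure_range_id_sub_of_norm_le_one hR
end

section
/- Let V be a closed linear subspace of a real Hilbert space X with V ≠ X, let R_V := P_V - P_{V⊥} be the reflector across V, and let β ∈ [0,1]. Then the modulus of averagedness of (1-β)Id + βR_V equals β. -/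
open Set
variable {X : Type*} [NormedAddCommGroup X] [InnerProductSpace ℝ X] [CompleteSpace X]

/-
The reflector is an isometry, so `β` is admissible. Conversely, on a nonzero `v ∈ Vᗮ` the
operator acts as multiplication by `1 - 2β`, and a `κ`-averaged map can only have such
"eigenvalues" `c` with `|c - (1 - κ)| ≤ κ`; for `c = 1 - 2β` this says `β ≤ κ`.
-/

theorem Isometry.nonexpansive {E : Type*} [NormedAddCommGroup E] {N : E → E}
    (hN : Isometry N) : Nonexpansive N := fun x y => by
  rw [← dist_eq_norm, ← dist_eq_norm, hN.dist_eq]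

section Averaged

variable {E : Type*} [NormedAddCommGroup E] [InnerProductSpace ℝ E]

theorem IsAveraged.norm_sub_sub_le {T : E → E} {κ : ℝ} (hT : IsAveraged T κ) (hκ : 0 ≤ κ)
    (x y : E) : ‖T x - T y - (1 - κ) • (x - y)‖ ≤ κ * ‖x - y‖ := by
  obtain ⟨N, hN, hTN⟩ := hT
  have hdiff : T x - T y - (1 - κ) • (x - y) = κ • (N x - N y) := by
    rw [hTN, hTN]; module
  rw [hdiff, norm_smul, Real.norm_of_nonneg hκ]
  exact mul_le_mul_of_nonneg_left (hN x y) hκ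

theorem IsAveraged.abs_sub_le_of_sub_eq_smul {T : E → E} {κ c : ℝ} (hT : IsAveraged T κ)
    (hκ : 0 ≤ κ) {x y : E} (hxy : x ≠ y) (hc : T x - T y = c • (x - y)) :
    |c - (1 - κ)| ≤ κ := by
  have h := hT.norm_sub_sub_le hκ x y
  rw [hc, ← sub_smul, norm_smul, Real.norm_eq_abs] at h
  exact le_of_mul_le_mul_right h (norm_pos_iff.mpr (sub_ne_zero.mpr hxy))

end Averaged

theorem modulus_relaxed_reflector (V : Submodule ℝ X) [CompleteSpace V]
    (hV : V ≠ ⊤) (β : ℝ) (hβ : β ∈ Icc (0 : ℝ) 1) :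
    IsLeast {κ : ℝ | κ ∈ Icc (0 : ℝ) 1 ∧
        IsAveraged (fun x : X =>
          (1 - β) • x + β • ((2 : ℝ) • (V.orthogonalProjection x : X) - x)) κ} β := by
  have hR (x : X) : (2 : ℝ) • (V.orthogonalProjection x : X) - x = V.reflection x := by
    rw [Submodule.reflection_apply, two_smul, two_smul]; rfl
  simp only [hR]
  refine ⟨⟨hβ, V.reflection, V.reflection.isometry.nonexpansive, fun _ => rfl⟩, ?_⟩
  rintro κ ⟨hκ, hTκ⟩
  obtain ⟨v, hv, hv0⟩ :=
    Submodule.exists_mem_ne_zero_of_ne_bot ((Submodule.orthogonal_eq_bot_iff).not.mpr hV)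
  have hc := hTκ.abs_sub_le_of_sub_eq_smul hκ.1 hv0 (c := 1 - 2 * β) <| by
    simp only [Submodule.reflection_mem_subspace_orthogonalComplement_eq_neg hv, map_zero]
    module
  linarith [(abs_le.mp hc).1]
end

section
/- Let T : X → X be a bounded linear nonexpansive operator on a real Hilbert space. Then T and its adjoint T* have the same modulus of averagedness: κ(T) = κ(T*). -/
open Set

variable {X : Type*} [NormedAddCommGroup X] [InnerProductSpace ℝ X] [CompleteSpace X]

/-!
For linear `T` and `κ ≥ 0`, `T` is `κ`-averaged exactly when `‖T - (1 - κ) Id‖ ≤ κ`: the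
nonexpansive part can be taken to be the linear map `κ⁻¹ (T - (1 - κ) Id)`. Since taking adjoints
is an isometry and `(T - (1 - κ) Id)* = T* - (1 - κ) Id`, this condition is the same for `T` and
`T*`, so `T` and `T*` are `κ`-averaged for the same `κ`.
-/

namespace ContinuousLinearMap

omit [CompleteSpace X]

theorem nonexpansive_of_norm_le_one {N : X →L[ℝ] X} (hN : ‖N‖ ≤ 1) : Nonexpansive N := by
  intro x y
  rw [← map_sub]
  simpa using N.le_of_opNorm_le hN (x - y)

theorem exists_nonexpansive_eq_smul_iff_norm_le (S : X →L[ℝ] X) {κ : ℝ} (hκ : 0 ≤ κ) :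
    (∃ N : X → X, Nonexpansive N ∧ ∀ x, S x = κ • N x) ↔ ‖S‖ ≤ κ := by
  constructor
  · rintro ⟨N, hN, hSN⟩
    refine S.opNorm_le_bound hκ fun x => ?_
    -- `S 0 = 0` forces `κ • N 0 = 0`, so `S x = κ • (N x - N 0)`
    have hS : S x = κ • (N x - N 0) := by
      rw [smul_sub, ← hSN, ← hSN, map_zero, sub_zero]
    calc ‖S x‖ = κ * ‖N x - N 0‖ := by rw [hS, norm_smul, Real.norm_of_nonneg hκ]
      _ ≤ κ * ‖x‖ := by simpa using mul_le_mul_of_nonneg_left (hN x 0) hκ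
  · intro hS
    refine ⟨⇑(κ⁻¹ • S), nonexpansive_of_norm_le_one ?_, fun x => ?_⟩
    · calc ‖κ⁻¹ • S‖ = κ⁻¹ * ‖S‖ := by rw [norm_smul, Real.norm_of_nonneg (inv_nonneg.2 hκ)]
        _ ≤ κ⁻¹ * κ := by gcongr
        _ ≤ 1 := inv_mul_le_one_of_le₀ le_rfl hκ
    -- at `κ = 0` the junk value `0⁻¹ = 0` is harmless, since then `S = 0`
    · rcases hκ.eq_or_lt with rfl | hκ
      · simp [norm_le_zero_iff.1 hS]
      · simp [smul_smul, hκ.ne']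

theorem isAveraged_iff_norm_sub_le (T : X →L[ℝ] X) {κ : ℝ} (hκ : 0 ≤ κ) :
    IsAveraged T κ ↔ ‖T - (1 - κ) • .id ℝ X‖ ≤ κ := by
  rw [← exists_nonexpansive_eq_smul_iff_norm_le _ hκ]
  simp only [IsAveraged, sub_apply, smul_apply, id_apply, sub_eq_iff_eq_add']

end ContinuousLinearMap

theorem ContinuousLinearMap.isAveraged_adjoint_iff (T : X →L[ℝ] X) {κ : ℝ} (hκ : 0 ≤ κ) :
    IsAveraged (adjoint T) κ ↔ IsAveraged T κ := by
  have hadj : adjoint T - (1 - κ) • .id ℝ X = adjoint (T - (1 - κ) • .id ℝ X) := by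
    rw [map_sub, map_smul, adjoint_id]
  rw [isAveraged_iff_norm_sub_le _ hκ, isAveraged_iff_norm_sub_le _ hκ, hadj,
    LinearIsometryEquiv.norm_map]

theorem modulus_adjoint_general (T : X →L[ℝ] X) :
    sInf {κ : ℝ | κ ∈ Icc (0 : ℝ) 1 ∧ IsAveraged (⇑T) κ}
      = sInf {κ : ℝ | κ ∈ Icc (0 : ℝ) 1 ∧ IsAveraged (⇑(ContinuousLinearMap.adjoint T)) κ} := by
  congr 1
  ext κ
  exact and_congr_right fun hκ => (T.isAveraged_adjoint_iff hκ.1).symm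

theorem modulus_adjoint (T : X →L[ℝ] X) (hT : ‖T‖ ≤ 1) :
    sInf {κ : ℝ | κ ∈ Icc (0 : ℝ) 1 ∧ IsAveraged (⇑T) κ}
      = sInf {κ : ℝ | κ ∈ Icc (0 : ℝ) 1 ∧ IsAveraged (⇑(ContinuousLinearMap.adjoint T)) κ} :=
  modulus_adjoint_general T
end

section
/- Let U, V be closed linear subspaces of a real Hilbert space X with U a proper subspace and U ⊆ V, and let β ∈ (0,1). Then ((1-β)Id + βR_V)P_U = P_U, and the modulus of averagedness of this operator equals 1/2. -/
open Set

variable {X : Type*} [NormedAddCommGroup X] [InnerProductSpace ℝ X] [CompleteSpace X]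

/-!
Since `P_U x ∈ V` is fixed by `R_V`, the operator is `P_U` itself. Now `P_U = ½ Id + ½ R_U` with
`R_U` an isometry, so `P_U` is `½`-averaged. Conversely, if `T = (1 - κ) Id + κ N` identifies two
points `x ≠ y`, then `(1 - κ)(x - y) = -κ (N x - N y)`, and nonexpansiveness of `N` forces
`|1 - κ| ≤ |κ|`, i.e. `κ ≥ ½`; `P_U` identifies any nonzero `x ∈ Uᗮ` with `0`.
-/

section

variable {E : Type*} [NormedAddCommGroup E] [InnerProductSpace ℝ E]

theorem IsAveraged.one_half_le_of_apply_eq {T : E → E} {κ : ℝ} (hT : IsAveraged T κ) {x y : E}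
    (hxy : T x = T y) (hne : x ≠ y) : 1 / 2 ≤ κ := by
  obtain ⟨N, hN, hTN⟩ := hT
  have hcomb : κ • (N x - N y) = -((1 - κ) • (x - y)) := by
    rw [hTN, hTN] at hxy
    linear_combination (norm := module) hxy
  have hnorm : |1 - κ| * ‖x - y‖ ≤ |κ| * ‖x - y‖ := by
    calc |1 - κ| * ‖x - y‖ = ‖κ • (N x - N y)‖ := by
          rw [hcomb, norm_neg, norm_smul, Real.norm_eq_abs]
      _ = |κ| * ‖N x - N y‖ := by rw [norm_smul, Real.norm_eq_abs]
      _ ≤ |κ| * ‖x - y‖ := by gcongr; exact hN x y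
  have habs : |1 - κ| ≤ |κ| := le_of_mul_le_mul_right hnorm (norm_pos_iff.mpr (sub_ne_zero.mpr hne))
  nlinarith [sq_le_sq.mpr habs]

namespace Submodule

variable (K : Submodule ℝ E) [K.HasOrthogonalProjection]

theorem nonexpansive_reflection : Nonexpansive K.reflection := fun x y => by
  rw [← map_sub, LinearIsometryEquiv.norm_map]

theorem isAveraged_starProjection : IsAveraged K.starProjection (1 / 2) :=
  ⟨K.reflection, K.nonexpansive_reflection, fun x => by rw [reflection_apply]; module⟩

theorem exists_ne_zero_starProjection_eq_zero (hK : K ≠ ⊤) :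
    ∃ x ≠ 0, K.starProjection x = 0 := by
  obtain ⟨x, hxK, hx⟩ := exists_mem_ne_zero_of_ne_bot (mt K.orthogonal_eq_bot_iff.mp hK)
  exact ⟨x, hx, by rw [starProjection_apply, orthogonalProjectionOnto_apply_of_mem_orthogonal hxK,
    coe_zero]⟩

theorem isLeast_averagedness_starProjection (hK : K ≠ ⊤) :
    IsLeast {κ : ℝ | κ ∈ Icc (0 : ℝ) 1 ∧ IsAveraged K.starProjection κ} (1 / 2) := by
  refine ⟨⟨⟨by norm_num, by norm_num⟩, K.isAveraged_starProjection⟩, fun κ ⟨_, hκ⟩ => ?_⟩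
  obtain ⟨x, hx, hPx⟩ := K.exists_ne_zero_starProjection_eq_zero hK
  exact hκ.one_half_le_of_apply_eq (hPx.trans (map_zero _).symm) hx

theorem relaxed_reflection_apply_of_mem (β : ℝ) {p : E} (hp : p ∈ K) :
    (1 - β) • p + β • ((2 : ℝ) • (K.orthogonalProjectionOnto p : E) - p) = p := by
  rw [← starProjection_apply, starProjection_eq_self_iff.mpr hp]
  module

end Submodule

end

theorem modulus_nested_subspaces_general (U V : Submodule ℝ X)
    [CompleteSpace U] [CompleteSpace V]
    (hU : U ≠ ⊤) (hUV : U ≤ V) (β : ℝ)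
    (T : X → X)
    (hT : T = fun x : X => (1 - β) • (Submodule.orthogonalProjectionOnto U x : X) +
        β • ((2 : ℝ) • (Submodule.orthogonalProjectionOnto V (Submodule.orthogonalProjectionOnto U x : X) : X)
          - (Submodule.orthogonalProjectionOnto U x : X))) :
    (∀ x : X, T x = (Submodule.orthogonalProjectionOnto U x : X)) ∧
      IsLeast {κ : ℝ | κ ∈ Icc (0 : ℝ) 1 ∧ IsAveraged T κ} (1 / 2) := by
  have hTP : T = U.starProjection := by
    funext x
    rw [hT]
    exact V.relaxed_reflection_apply_of_mem β (hUV (U.orthogonalProjectionOnto x).2)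
  subst hTP
  exact ⟨fun x => rfl, U.isLeast_averagedness_starProjection hU⟩

theorem modulus_nested_subspaces (U V : Submodule ℝ X)
    [CompleteSpace U] [CompleteSpace V]
    (hU : U ≠ ⊤) (hUV : U ≤ V) (β : ℝ) (hβ : β ∈ Ioo (0 : ℝ) 1)
    (T : X → X)
    (hT : T = fun x : X => (1 - β) • (Submodule.orthogonalProjectionOnto U x : X) +
        β • ((2 : ℝ) • (Submodule.orthogonalProjectionOnto V (Submodule.orthogonalProjectionOnto U x : X) : X)
          - (Submodule.orthogonalProjectionOnto U x : X))) :
    (∀ x : X, T x = (Submodule.orthogonalProjectionOnto U x : X)) ∧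
      IsLeast {κ : ℝ | κ ∈ Icc (0 : ℝ) 1 ∧ IsAveraged T κ} (1 / 2) :=
  modulus_nested_subspaces_general U V hU hUV β T hT
end

section
/- Let U, V be closed linear subspaces of a real Hilbert space X. Then the closure of P_{V⊥}(U) equals (U⊥ ∩ V⊥)^⊥ ∩ V⊥, where P_{V⊥} is the orthogonal projection onto V⊥. -/
/-! Since `P = P_{V⊥}` is self-adjoint, `(P U)ᗮ = P⁻¹(Uᗮ)`, and splitting `x = P x + (x - P x)` shows
`P⁻¹(Uᗮ) = (Uᗮ ⊓ Vᗮ) ⊔ V`. The closure of `P U` is its double orthogonal complement, and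
`((Uᗮ ⊓ Vᗮ) ⊔ V)ᗮ = (Uᗮ ⊓ Vᗮ)ᗮ ⊓ Vᗮ`. -/

section

variable {𝕜 E : Type*} [RCLike 𝕜] [NormedAddCommGroup E] [InnerProductSpace 𝕜 E]

theorem LinearMap.IsSymmetric.orthogonal_map {T : E →ₗ[𝕜] E} (hT : T.IsSymmetric)
    (U : Submodule 𝕜 E) : (U.map T)ᗮ = Uᗮ.comap T := by
  ext x
  simp [Submodule.mem_orthogonal, hT _ x]

theorem Submodule.comap_starProjection (K : Submodule 𝕜 E) [K.HasOrthogonalProjection]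
    (S : Submodule 𝕜 E) : S.comap (K.starProjection : E →ₗ[𝕜] E) = (S ⊓ K) ⊔ Kᗮ := by
  apply le_antisymm
  · intro x hx
    rw [← add_sub_cancel (K.starProjection x) x]
    exact add_mem_sup ⟨hx, K.starProjection_apply_mem x⟩ (K.sub_starProjection_mem_orthogonal x)
  · refine sup_le (fun a ha => ?_) (fun v hv => ?_)
    · simpa [Submodule.mem_comap, K.starProjection_eq_self_iff.2 ha.2] using ha.1
    · simp [Submodule.mem_comap, K.starProjection_apply_eq_zero_iff.2 hv]

end

theorem closure_proj_image_general {X : Type*} [NormedAddCommGroup X] [InnerProductSpace ℝ X]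
    [CompleteSpace X] (U V : Submodule ℝ X) [CompleteSpace V] :
    closure ((fun x : X => (Submodule.orthogonalProjectionOnto Vᗮ x : X)) '' (U : Set X))
      = (((Uᗮ ⊓ Vᗮ)ᗮ ⊓ Vᗮ : Submodule ℝ X) : Set X) := by
  have himage : (fun x : X => (Submodule.orthogonalProjectionOnto Vᗮ x : X)) '' (U : Set X)
      = (U.map (Vᗮ.starProjection : X →ₗ[ℝ] X) : Set X) := rfl
  rw [himage, ← Submodule.topologicalClosure_coe, ← Submodule.orthogonal_orthogonal_eq_closure,
    Vᗮ.starProjection_isSymmetric.orthogonal_map, Submodule.comap_starProjection,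
    Submodule.orthogonal_orthogonal, ← Submodule.inf_orthogonal]

theorem closure_proj_image {X : Type*} [NormedAddCommGroup X] [InnerProductSpace ℝ X]
    [CompleteSpace X] (U V : Submodule ℝ X) [CompleteSpace U] [CompleteSpace V] :
    closure ((fun x : X => (Submodule.orthogonalProjectionOnto Vᗮ x : X)) '' (U : Set X))
      = (((Uᗮ ⊓ Vᗮ)ᗮ ⊓ Vᗮ : Submodule ℝ X) : Set X) :=
  closure_proj_image_general U V
end
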